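/- arXiv:2412.05008 — 2 statements merged into one kernel-verified Lean document; each statement's English description precedes it below -/
import Mathlib

section
/- Let A be a unital C*-algebra, H a complex Hilbert space, P ∈ B(H) positive, and Φ ∈ CP^{(P)}(A,B(H)). Then the following are equivalent: (i) Φ is a P-C*-extreme point of CP^{(P)}(A,B(H)); (ii) for every CP map Ψ : A → B(H) with Ψ ≤_cp Φ and Ψ(1) = B* P B for some invertible B ∈ B(H), there exists an invertible Z ∈ B(H) such that Ψ = Ad_Z∘Φ. -/
open scoped ComplexOrder

noncomputable section

section Defs

variable {A H : Type*}
variable [NormedAddCommGroup H] [InnerProductSpace ℂ H]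

/-- An operator on a complex inner product space is positive:
`0 ≤ ⟪x, T x⟫` for all `x`. -/
def IsPosOp (T : H →L[ℂ] H) : Prop := ∀ x : H, 0 ≤ (inner ℂ x (T x) : ℂ)

variable [Ring A] [StarRing A] [Algebra ℂ A]

/-- Complete positivity of a linear map `Φ : A → B(H)`:
`∑_{i,j} ⟪h i, Φ(a i* a j) (h j)⟫ ≥ 0` for all finite families. -/
def IsCPMap (Φ : A →ₗ[ℂ] (H →L[ℂ] H)) : Prop :=
  ∀ (n : ℕ) (a : Fin n → A) (h : Fin n → H),
    0 ≤ ∑ i, ∑ j, (inner ℂ (h i) ((Φ (star (a i) * a j)) (h j)) : ℂ)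

/-- `CP^{(P)}(A, B(H))`: the CP maps `Φ` with `Φ 1 = P`. -/
def CPP (P : H →L[ℂ] H) : Set (A →ₗ[ℂ] (H →L[ℂ] H)) := {Φ | IsCPMap Φ ∧ Φ 1 = P}

/-- `CCP(A, B(H))`: the contractive CP maps, i.e. CP maps with `Φ 1 ≤ 1`. -/
def CCPmaps : Set (A →ₗ[ℂ] (H →L[ℂ] H)) := {Φ | IsCPMap Φ ∧ IsPosOp (1 - Φ 1)}

variable [CompleteSpace H]

/-- `Ad_T : X ↦ T* X T`, as a linear map on `B(H)`. -/
def conjAd (T : H →L[ℂ] H) : (H →L[ℂ] H) →ₗ[ℂ] (H →L[ℂ] H) where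
  toFun X := star T * X * T
  map_add' X Y := by simp [add_mul, mul_add]
  map_smul' c X := by simp [mul_smul_comm, smul_mul_assoc]

/-- `Φ ∈ CP^{(P)}` is a `P`-`C*`-extreme point of `CP^{(P)}(A, B(H))`:
whenever `Φ = ∑ Ad_{T j} ∘ Φs j` is a proper `P`-`C*`-convex combination of members of
`CP^{(P)}`, each `Φs j` equals `Ad_{S j} ∘ Φ` for some invertible `S j`. -/
def IsPCExtreme (P : H →L[ℂ] H) (Φ : A →ₗ[ℂ] (H →L[ℂ] H)) : Prop :=
  Φ ∈ CPP (A := A) P ∧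
  ∀ (n : ℕ) (T : Fin n → (H →L[ℂ] H)) (Φs : Fin n → (A →ₗ[ℂ] (H →L[ℂ] H))),
    (∀ j, IsUnit (T j)) → (∀ j, Φs j ∈ CPP (A := A) P) →
    (∑ j, star (T j) * P * T j) = P →
    Φ = ∑ j, (conjAd (T j)).comp (Φs j) →
    ∀ j, ∃ S : H →L[ℂ] H, IsUnit S ∧ Φs j = (conjAd S).comp Φ

/-- `Φ ∈ C` is a `C*`-extreme point of the `C*`-convex set `C`:
whenever `Φ = ∑ Ad_{T j} ∘ Φs j` is a proper `C*`-convex combination of members of `C`,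
each `Φs j` is unitarily equivalent to `Φ`. -/
def IsCstarExtreme (C : Set (A →ₗ[ℂ] (H →L[ℂ] H))) (Φ : A →ₗ[ℂ] (H →L[ℂ] H)) : Prop :=
  Φ ∈ C ∧
  ∀ (n : ℕ) (T : Fin n → (H →L[ℂ] H)) (Φs : Fin n → (A →ₗ[ℂ] (H →L[ℂ] H))),
    (∀ j, IsUnit (T j)) → (∀ j, Φs j ∈ C) →
    (∑ j, star (T j) * T j) = 1 →
    Φ = ∑ j, (conjAd (T j)).comp (Φs j) →
    ∀ j, ∃ U : H →L[ℂ] H, U ∈ unitary (H →L[ℂ] H) ∧ Φs j = (conjAd U).comp Φ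

/-- `Φ ∈ C` is a linear extreme point of the convex set `C`. -/
def IsLinExtreme (C : Set (A →ₗ[ℂ] (H →L[ℂ] H))) (Φ : A →ₗ[ℂ] (H →L[ℂ] H)) : Prop :=
  Φ ∈ C ∧
  ∀ (n : ℕ) (t : Fin n → ℝ) (Φs : Fin n → (A →ₗ[ℂ] (H →L[ℂ] H))),
    (∀ j, 0 < t j ∧ t j < 1) → (∀ j, Φs j ∈ C) → (∑ j, t j) = 1 →
    Φ = ∑ j, (t j : ℂ) • Φs j →
    ∀ j, Φs j = Φ

end Defs

/-!
(ii) ⇒ (i): in a `P`-`C*`-convex decomposition `Φ = ∑ Ad_{T_j} ∘ Φ_j` each summand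
`Ψ = Ad_{T_j} ∘ Φ_j` is CP, is dominated by `Φ` (the other summands are CP), and has
`Ψ 1 = T_j* P T_j`; so `Ψ = Ad_Z ∘ Φ`, i.e. `Φ_j = Ad_{Z T_j⁻¹} ∘ Φ`.

(i) ⇒ (ii): split `Φ = ¼ Ψ + (Φ - ¼ Ψ)`. The first summand has unit `(½ B)* P (½ B)`; the
second has unit `R = P - ¼ B* P B`, which satisfies `R ≤ P ≤ 2 R` because `0 ≤ B* P B ≤ P`.
Douglas' factorisation lemma, applied to `√P` and `√R` in both directions, gives an invertible
`G` with `G √P = √R`, hence `R = C* P C` with `C = G*`. Both summands are therefore of the form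
`Ad_T ∘ Φ'` with `Φ' ∈ CP^{(P)}` and `T` invertible, and extremality of `Φ` applies to them.
-/

open scoped InnerProductSpace

theorem isUnit_add_one_sub_of_mul_eq {R : Type*} [Ring R] {q d e : R}
    (hqd : q * d = d) (hdq : d * q = d) (hqe : q * e = e) (heq : e * q = e)
    (hde : d * e = q) (hed : e * d = q) : IsUnit (d + (1 - q)) := by
  have hqq : q * q = q := calc
    q * q = q * (d * e) := by rw [hde]
    _ = q := by rw [← mul_assoc, hqd, hde]
  refine ⟨⟨d + (1 - q), e + (1 - q), ?_, ?_⟩, rfl⟩ <;>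
    simp only [mul_add, add_mul, mul_sub, sub_mul, mul_one, one_mul, hde, hed, hdq, hqd, heq,
      hqe, hqq] <;> abel

namespace ContinuousLinearMap

section InnerProductSpace

variable {𝕜 E F : Type*} [RCLike 𝕜]
  [NormedAddCommGroup E] [NormedSpace 𝕜 E] [NormedAddCommGroup F] [InnerProductSpace 𝕜 F]

theorem re_inner_le_re_inner_of_le {A B : F →L[𝕜] F} (h : A ≤ B) (x : F) :
    RCLike.re ⟪A x, x⟫_𝕜 ≤ RCLike.re ⟪B x, x⟫_𝕜 := by
  have := ((le_def A B).mp h).re_inner_nonneg_left x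
  rwa [sub_apply, inner_sub_left, map_sub, sub_nonneg] at this

theorem eq_starProjection_of_comp_eq {K : Submodule 𝕜 F} [K.HasOrthogonalProjection]
    {T : E →L[𝕜] F} {X : F →L[𝕜] F} (hK : K ≤ T.range.topologicalClosure) (hXT : X ∘L T = T)
    (hX : X ∘L K.starProjection = X) : X = K.starProjection := by
  have hEqOn : Set.EqOn X id (closure T.range) := by
    refine Set.EqOn.closure ?_ X.continuous continuous_id
    rintro _ ⟨x, rfl⟩
    exact congr($hXT x)
  ext y
  rw [← hX]
  exact hEqOn ((Submodule.topologicalClosure_coe _).subset (hK (K.starProjection_apply_mem y)))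

variable [CompleteSpace F]

/-- Douglas' factorisation lemma. -/
theorem exists_comp_eq_of_norm_le {G : Type*} [NormedAddCommGroup G] [NormedSpace 𝕜 G]
    [CompleteSpace G] (S : E →L[𝕜] F) (T : E →L[𝕜] G) (c : ℝ) (h : ∀ x, ‖T x‖ ≤ c * ‖S x‖) :
    ∃ D : F →L[𝕜] G, D ∘L S = T := by
  set K := S.range.topologicalClosure
  have hSK : ∀ x, S x ∈ K := fun x => S.range.le_topologicalClosure (LinearMap.mem_range_self _ x)
  let e : E →ₗ[𝕜] K := (S : E →ₗ[𝕜] F).codRestrict K hSK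
  have he : DenseRange e := by
    refine Subtype.dense_iff.mpr ?_
    rw [← Set.range_comp]
    exact (Submodule.topologicalClosure_coe _).le
  refine ⟨(T : E →ₗ[𝕜] G).extendOfNorm e ∘L K.orthogonalProjectionOnto, ?_⟩
  ext x
  have hproj : K.orthogonalProjectionOnto (S x) = e x :=
    K.orthogonalProjectionOnto_mem_subspace_eq_self (e x)
  simp [hproj, LinearMap.extendOfNorm_eq he ⟨c, h⟩]

theorem exists_isUnit_comp_eq_of_norm_le {S T : E →L[𝕜] F}
    (hK : S.range.topologicalClosure = T.range.topologicalClosure) {c c' : ℝ}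
    (hTS : ∀ x, ‖T x‖ ≤ c * ‖S x‖) (hST : ∀ x, ‖S x‖ ≤ c' * ‖T x‖) :
    ∃ G : F →L[𝕜] F, IsUnit G ∧ G ∘L S = T := by
  set K := T.range.topologicalClosure
  set q := K.starProjection
  have hq : IsIdempotentElem q := K.isIdempotentElem_starProjection
  have hqS : q ∘L S = S := by
    ext x
    exact K.starProjection_eq_self_iff.mpr
      (hK ▸ S.range.le_topologicalClosure (LinearMap.mem_range_self _ x))
  have hqT : q ∘L T = T := by
    ext x
    exact K.starProjection_eq_self_iff.mpr
      (T.range.le_topologicalClosure (LinearMap.mem_range_self _ x))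
  obtain ⟨D, hD⟩ := S.exists_comp_eq_of_norm_le T c hTS
  obtain ⟨D', hD'⟩ := T.exists_comp_eq_of_norm_le S c' hST
  -- compressing `D` and `D'` to `K` makes them mutually inverse there
  set d := q * D * q
  set e := q * D' * q
  have hdS : d ∘L S = T := by simp only [d, mul_def, comp_assoc, hqS, hD, hqT]
  have heT : e ∘L T = S := by simp only [e, mul_def, comp_assoc, hqS, hD', hqT]
  have hqd : q * d = d := by simp only [d, ← mul_assoc, hq.eq]
  have hdq : d * q = d := by simp only [d, mul_assoc, hq.eq]
  have hqe : q * e = e := by simp only [e, ← mul_assoc, hq.eq]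
  have heq : e * q = e := by simp only [e, mul_assoc, hq.eq]
  have hde : d * e = q :=
    eq_starProjection_of_comp_eq le_rfl (by rw [mul_def, comp_assoc, heT, hdS])
      (by rw [← mul_def, mul_assoc, heq])
  have hed : e * d = q :=
    eq_starProjection_of_comp_eq hK.ge (by rw [mul_def, comp_assoc, hdS, heT])
      (by rw [← mul_def, mul_assoc, hdq])
  refine ⟨d + (1 - q), isUnit_add_one_sub_of_mul_eq hqd hdq hqe heq hde hed, ?_⟩
  rw [add_comp, sub_comp, one_def, id_comp, hdS, hqS, sub_self, add_zero]

end InnerProductSpace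

variable {H : Type*} [NormedAddCommGroup H] [InnerProductSpace ℂ H] [CompleteSpace H]

theorem norm_sqrt_apply_sq {A : H →L[ℂ] H} (hA : 0 ≤ A) (x : H) :
    ‖CFC.sqrt A x‖ ^ 2 = RCLike.re ⟪A x, x⟫_ℂ := by
  rw [apply_norm_sq_eq_inner_adjoint_left, ← star_eq_adjoint,
    (CFC.sqrt_nonneg A).isSelfAdjoint.star_eq, ← mul_def, CFC.sqrt_mul_sqrt_self A hA]

theorem exists_isUnit_star_mul_mul_eq_of_le {P R : H →L[ℂ] H}
    (hR : 0 ≤ R) (hRP : R ≤ P) {c : ℝ} (hPR : P ≤ c • R) :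
    ∃ C : H →L[ℂ] H, IsUnit C ∧ star C * P * C = R := by
  have hP : 0 ≤ P := hR.trans hRP
  set S := CFC.sqrt P
  set T := CFC.sqrt R
  have hS : IsSelfAdjoint S := (CFC.sqrt_nonneg P).isSelfAdjoint
  have hT : IsSelfAdjoint T := (CFC.sqrt_nonneg R).isSelfAdjoint
  have hTS : ∀ x, ‖T x‖ ≤ 1 * ‖S x‖ := fun x => by
    rw [one_mul, ← sq_le_sq₀ (norm_nonneg _) (norm_nonneg _), norm_sqrt_apply_sq hR,
      norm_sqrt_apply_sq hP]
    exact re_inner_le_re_inner_of_le hRP x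
  have hST : ∀ x, ‖S x‖ ≤ √c * ‖T x‖ := fun x => by
    rw [← Real.sqrt_sq (norm_nonneg (S x)), ← Real.sqrt_sq (norm_nonneg (T x)),
      ← Real.sqrt_mul' _ (sq_nonneg _)]
    refine Real.sqrt_le_sqrt ?_
    rw [norm_sqrt_apply_sq hR, norm_sqrt_apply_sq hP]
    simpa [inner_smul_left_eq_smul] using re_inner_le_re_inner_of_le hPR x
  have hker : S.ker = T.ker := by
    ext x
    simp only [LinearMap.mem_ker, coe_coe]
    constructor <;> intro hx
    · simpa [hx] using hTS x
    · simpa [hx] using hST x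
  have hclosure : ∀ A : H →L[ℂ] H, IsSelfAdjoint A → A.range.topologicalClosure = A.kerᗮ :=
    fun A hA => by rw [orthogonal_ker, ← star_eq_adjoint, hA.star_eq]
  obtain ⟨G, hG, hGS⟩ := exists_isUnit_comp_eq_of_norm_le
    (by rw [hclosure S hS, hclosure T hT, hker]) hTS hST
  refine ⟨star G, hG.star, ?_⟩
  have hGS' : G * S = T := hGS
  have hSS : S * S = P := CFC.sqrt_mul_sqrt_self P hP
  calc star (star G) * P * star G = (G * S) * star (G * S) := by
        rw [star_star, star_mul, hS.star_eq, ← hSS]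
        simp only [mul_assoc]
    _ = R := by rw [hGS', hT.star_eq, CFC.sqrt_mul_sqrt_self R hR]

end ContinuousLinearMap

section CPMaps

variable {A H : Type*} [Ring A] [StarRing A] [Algebra ℂ A]
  [NormedAddCommGroup H] [InnerProductSpace ℂ H]

theorem IsPosOp.nonneg {T : H →L[ℂ] H} (hT : IsPosOp T) : 0 ≤ T := by
  have h : ∀ x, 0 ≤ ⟪T x, x⟫_ℂ := fun x => by
    rw [← inner_conj_symm]
    exact star_nonneg_iff.mpr (hT x)
  rw [ContinuousLinearMap.nonneg_iff_isPositive, ContinuousLinearMap.isPositive_iff]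
  exact ⟨(LinearMap.isSymmetric_iff_inner_map_self_real _).mpr
    fun x => (IsSelfAdjoint.of_nonneg (h x)).star_eq, h⟩

namespace IsCPMap

variable {Φ Ψ : A →ₗ[ℂ] (H →L[ℂ] H)}

theorem zero : IsCPMap (0 : A →ₗ[ℂ] (H →L[ℂ] H)) := fun n a h => by simp

theorem add (hΦ : IsCPMap Φ) (hΨ : IsCPMap Ψ) : IsCPMap (Φ + Ψ) := fun n a h => by
  simpa [inner_add_right, Finset.sum_add_distrib] using add_nonneg (hΦ n a h) (hΨ n a h)

theorem smul (hΦ : IsCPMap Φ) {c : ℂ} (hc : 0 ≤ c) : IsCPMap (c • Φ) := fun n a h => by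
  simpa [inner_smul_right, Finset.mul_sum] using mul_nonneg hc (hΦ n a h)

theorem sum {ι : Type*} (s : Finset ι) {Φ : ι → A →ₗ[ℂ] (H →L[ℂ] H)}
    (hΦ : ∀ i ∈ s, IsCPMap (Φ i)) : IsCPMap (∑ i ∈ s, Φ i) :=
  Finset.sum_induction _ IsCPMap (fun _ _ => add) zero hΦ

theorem map_one_nonneg (hΦ : IsCPMap Φ) : 0 ≤ Φ 1 :=
  IsPosOp.nonneg fun x => by simpa using hΦ 1 (fun _ => 1) (fun _ => x)

end IsCPMap

end CPMaps

section ConjAd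

variable {H : Type*} [NormedAddCommGroup H] [InnerProductSpace ℂ H] [CompleteSpace H]

@[simp]
theorem conjAd_apply (T X : H →L[ℂ] H) : conjAd T X = star T * X * T := rfl

theorem conjAd_mul (S T : H →L[ℂ] H) : conjAd (S * T) = (conjAd T).comp (conjAd S) := by
  ext1 X
  simp only [conjAd_apply, star_mul, LinearMap.comp_apply, mul_assoc]

theorem conjAd_one : conjAd (1 : H →L[ℂ] H) = LinearMap.id := by
  ext1 X
  simp

theorem conjAd_smul (c : ℂ) (T : H →L[ℂ] H) : conjAd (c • T) = (c * star c) • conjAd T := by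
  ext1 X
  simp only [conjAd_apply, star_smul, smul_mul_assoc, mul_smul_comm, smul_smul,
    LinearMap.smul_apply]

variable {A : Type*} [Ring A] [StarRing A] [Algebra ℂ A] {Φ Ψ : A →ₗ[ℂ] (H →L[ℂ] H)}
  {P : H →L[ℂ] H}

theorem IsCPMap.conjAd_comp (hΦ : IsCPMap Φ) (T : H →L[ℂ] H) : IsCPMap ((conjAd T).comp Φ) :=
  fun n a h => by
    simpa [ContinuousLinearMap.star_eq_adjoint, ContinuousLinearMap.adjoint_inner_right]
      using hΦ n a (fun i => T (h i))

theorem IsCPMap.exists_mem_CPP_eq_conjAd_comp (hΨ : IsCPMap Ψ) {T : H →L[ℂ] H} (hT : IsUnit T)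
    (hΨ1 : Ψ 1 = star T * P * T) : ∃ Φ ∈ CPP P, Ψ = (conjAd T).comp Φ := by
  obtain ⟨u, rfl⟩ := hT
  refine ⟨(conjAd ↑u⁻¹).comp Ψ, ⟨hΨ.conjAd_comp _, ?_⟩, ?_⟩
  · rw [LinearMap.comp_apply, hΨ1, ← conjAd_apply, ← LinearMap.comp_apply, ← conjAd_mul,
      Units.mul_inv, conjAd_one, LinearMap.id_apply]
  · rw [← LinearMap.comp_assoc, ← conjAd_mul, Units.inv_mul, conjAd_one, LinearMap.id_comp]

end ConjAd

section Extreme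

variable {A H : Type*} [Ring A] [StarRing A] [Algebra ℂ A]
  [NormedAddCommGroup H] [InnerProductSpace ℂ H] [CompleteSpace H]
  {P : H →L[ℂ] H} {Φ Ψ : A →ₗ[ℂ] (H →L[ℂ] H)}

theorem IsPCExtreme.exists_eq_conjAd_comp_of_eq_add (hΦ : IsPCExtreme P Φ)
    {Ψ₁ Ψ₂ : A →ₗ[ℂ] (H →L[ℂ] H)} (hΨ₁ : IsCPMap Ψ₁) (hΨ₂ : IsCPMap Ψ₂)
    {T₁ T₂ : H →L[ℂ] H} (hT₁ : IsUnit T₁) (hT₂ : IsUnit T₂)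
    (hΨ₁1 : Ψ₁ 1 = star T₁ * P * T₁) (hΨ₂1 : Ψ₂ 1 = star T₂ * P * T₂) (hΦΨ : Φ = Ψ₁ + Ψ₂) :
    ∃ Z : H →L[ℂ] H, IsUnit Z ∧ Ψ₁ = (conjAd Z).comp Φ := by
  have hsum : star T₁ * P * T₁ + star T₂ * P * T₂ = P := by
    rw [← hΨ₁1, ← hΨ₂1, ← LinearMap.add_apply, ← hΦΨ, hΦ.1.2]
  obtain ⟨Φ₁, hΦ₁, rfl⟩ := hΨ₁.exists_mem_CPP_eq_conjAd_comp hT₁ hΨ₁1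
  obtain ⟨Φ₂, hΦ₂, rfl⟩ := hΨ₂.exists_mem_CPP_eq_conjAd_comp hT₂ hΨ₂1
  obtain ⟨S, hS, hΦ₁S⟩ := hΦ.2 2 ![T₁, T₂] ![Φ₁, Φ₂] (Fin.forall_fin_two.mpr ⟨hT₁, hT₂⟩)
    (Fin.forall_fin_two.mpr ⟨hΦ₁, hΦ₂⟩) (by simpa [Fin.sum_univ_two] using hsum)
    (by simpa [Fin.sum_univ_two] using hΦΨ) 0
  refine ⟨S * T₁, hS.mul hT₁, ?_⟩
  rw [conjAd_mul, LinearMap.comp_assoc, ← hΦ₁S]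
  rfl

theorem IsPCExtreme.exists_eq_conjAd_comp (hΦ : IsPCExtreme P Φ) (hΨ : IsCPMap Ψ)
    (hΦΨ : IsCPMap (Φ - Ψ)) {B : H →L[ℂ] H} (hB : IsUnit B) (hΨ1 : Ψ 1 = star B * P * B) :
    ∃ Z : H →L[ℂ] H, IsUnit Z ∧ Ψ = (conjAd Z).comp Φ := by
  have hΦ1 : Φ 1 = P := hΦ.1.2
  set Ψ₁ := (4⁻¹ : ℂ) • Ψ
  set Ψ₂ := Φ - Ψ₁
  have hΨ₁ : IsCPMap Ψ₁ := hΨ.smul (by positivity)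
  have hΨ₂ : IsCPMap Ψ₂ := by
    have h : Ψ₂ = (Φ - Ψ) + (3 / 4 : ℂ) • Ψ := by simp only [Ψ₂, Ψ₁]; module
    exact h ▸ hΦΨ.add (hΨ.smul (by positivity))
  have hRP : Ψ₂ 1 ≤ P := by
    rw [← sub_nonneg, ← hΦ1, ← LinearMap.sub_apply, sub_sub_cancel]
    exact hΨ₁.map_one_nonneg
  have hPR : P ≤ (2 : ℝ) • Ψ₂ 1 := by
    have h : (2 : ℝ) • Ψ₂ 1 - P = ((Φ - Ψ) + (2⁻¹ : ℂ) • Ψ) 1 := by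
      rw [← hΦ1, ← LinearMap.smul_apply, ← LinearMap.sub_apply]
      congr 1
      simp only [Ψ₂, Ψ₁]
      module
    rw [← sub_nonneg, h]
    exact (hΦΨ.add (hΨ.smul (by positivity))).map_one_nonneg
  obtain ⟨C, hC, hCR⟩ :=
    ContinuousLinearMap.exists_isUnit_star_mul_mul_eq_of_le hΨ₂.map_one_nonneg hRP hPR
  obtain ⟨Z, hZ, hΨ₁Z⟩ := hΦ.exists_eq_conjAd_comp_of_eq_add hΨ₁ hΨ₂ (T₁ := (2⁻¹ : ℂ) • B)
    (hB.smul (Units.mk0 (2⁻¹ : ℂ) (by norm_num))) hC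
    (by
      simp only [Ψ₁, LinearMap.smul_apply, hΨ1, star_smul, smul_mul_assoc, mul_smul_comm,
        smul_smul]
      norm_num)
    hCR.symm (add_sub_cancel _ _).symm
  refine ⟨(2 : ℂ) • Z, hZ.smul (Units.mk0 (2 : ℂ) (by norm_num)), ?_⟩
  rw [conjAd_smul, LinearMap.smul_comp, ← hΨ₁Z, smul_smul]
  norm_num

end Extreme

theorem isPCExtreme_of_forall_le_exists_eq_conjAd_comp {A H : Type*} [Ring A] [StarRing A]
    [Algebra ℂ A] [NormedAddCommGroup H] [InnerProductSpace ℂ H] [CompleteSpace H]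
    {P : H →L[ℂ] H} {Φ : A →ₗ[ℂ] (H →L[ℂ] H)} (hΦ : Φ ∈ CPP P)
    (h : ∀ Ψ : A →ₗ[ℂ] (H →L[ℂ] H), IsCPMap Ψ → IsCPMap (Φ - Ψ) →
      (∃ B : H →L[ℂ] H, IsUnit B ∧ Ψ 1 = star B * P * B) →
      ∃ Z : H →L[ℂ] H, IsUnit Z ∧ Ψ = (conjAd Z).comp Φ) :
    IsPCExtreme P Φ := by
  refine ⟨hΦ, fun n T Φs hT hΦs _ hsum j => ?_⟩
  set F := fun k => (conjAd (T k)).comp (Φs k)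
  have hF : ∀ k, IsCPMap (F k) := fun k => (hΦs k).1.conjAd_comp (T k)
  have hΦF : Φ - F j = ∑ k ∈ Finset.univ.erase j, F k := by
    rw [hsum, ← Finset.add_sum_erase _ _ (Finset.mem_univ j), add_sub_cancel_left]
  obtain ⟨Z, hZ, hFZ⟩ := h (F j) (hF j) (hΦF ▸ IsCPMap.sum _ fun k _ => hF k)
    ⟨T j, hT j, by simp [F, (hΦs j).2]⟩
  obtain ⟨u, hu⟩ := hT j
  refine ⟨Z * ↑u⁻¹, hZ.mul u⁻¹.isUnit, ?_⟩
  calc Φs j = (conjAd ↑u⁻¹).comp (F j) := by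
        rw [← LinearMap.comp_assoc, ← conjAd_mul, ← hu, Units.mul_inv, conjAd_one,
          LinearMap.id_comp]
    _ = (conjAd (Z * ↑u⁻¹)).comp Φ := by rw [hFZ, ← LinearMap.comp_assoc, ← conjAd_mul]

theorem stmt3_general {A : Type*} [NormedRing A] [StarRing A] [NormedAlgebra ℂ A]
    {H : Type*} [NormedAddCommGroup H] [InnerProductSpace ℂ H] [CompleteSpace H]
    (P : H →L[ℂ] H)
    (Φ : A →ₗ[ℂ] (H →L[ℂ] H)) (hΦ : Φ ∈ CPP (A := A) P) :
    IsPCExtreme P Φ ↔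
      ∀ Ψ : A →ₗ[ℂ] (H →L[ℂ] H), IsCPMap Ψ → IsCPMap (Φ - Ψ) →
        (∃ B : H →L[ℂ] H, IsUnit B ∧ Ψ 1 = star B * P * B) →
        ∃ Z : H →L[ℂ] H, IsUnit Z ∧ Ψ = (conjAd Z).comp Φ :=
  ⟨fun hext _ hΨ hΦΨ ⟨_, hB, hΨ1⟩ => hext.exists_eq_conjAd_comp hΨ hΦΨ hB hΨ1,
    isPCExtreme_of_forall_le_exists_eq_conjAd_comp hΦ⟩

/-- Theorem `thm-RNT-CP-P`. `Φ ∈ CP^{(P)}` is a `P`-`C*`-extreme point iff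
every CP map `Ψ ≤_cp Φ` with `Ψ(1) = B* P B` for some invertible `B` satisfies
`Ψ = Ad_Z ∘ Φ` for some invertible `Z`. -/
theorem stmt3 {A : Type*} [NormedRing A] [StarRing A] [CStarRing A] [NormedAlgebra ℂ A] [StarModule ℂ A] [CompleteSpace A]
    {H : Type*} [NormedAddCommGroup H] [InnerProductSpace ℂ H] [CompleteSpace H]
    (P : H →L[ℂ] H) (hP : IsPosOp P)
    (Φ : A →ₗ[ℂ] (H →L[ℂ] H)) (hΦ : Φ ∈ CPP (A := A) P) :
    IsPCExtreme P Φ ↔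
      ∀ Ψ : A →ₗ[ℂ] (H →L[ℂ] H), IsCPMap Ψ → IsCPMap (Φ - Ψ) →
        (∃ B : H →L[ℂ] H, IsUnit B ∧ Ψ 1 = star B * P * B) →
        ∃ Z : H →L[ℂ] H, IsUnit Z ∧ Ψ = (conjAd Z).comp Φ :=
  stmt3_general P Φ hΦ
end
end

section
/- Let H be a complex Hilbert space, P ∈ B(H) positive with P ≠ 0 and ker P ≠ {0}, and let H_0 be the closure of the range of P. If S ∈ B(H) is invertible and there exist scalars α, β ∈ (0,∞) with α·P ≤ S* P S ≤ β·P, then S maps H_0^⊥ into H_0^⊥ (equivalently S* maps H_0 onto H_0), and the compression of S to H_0 (i.e., the operator H_0 → H_0 given by x ↦ Q S x, where Q is the orthogonal projection onto H_0) is invertible in B(H_0). -/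
open scoped ComplexOrder

noncomputable section

section Compress

variable {A H : Type*} [NormedAddCommGroup H] [InnerProductSpace ℂ H]

/-- Compression `X ↦ Q X|_K` of an operator on `H` to an operator on the subspace `K`. -/
def compressOp (K : Submodule ℂ H) [K.HasOrthogonalProjection] (X : H →L[ℂ] H) : K →L[ℂ] K :=
  K.orthogonalProjectionOnto.comp (X.comp K.subtypeL)

variable [Ring A] [StarRing A] [Algebra ℂ A]

/-- Compression of a linear map `Φ : A → B(H)` to a linear map `A → B(K)`. -/
def compressCP (K : Submodule ℂ H) [K.HasOrthogonalProjection] (Φ : A →ₗ[ℂ] (H →L[ℂ] H)) :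
    A →ₗ[ℂ] (K →L[ℂ] K) where
  toFun a := compressOp K (Φ a)
  map_add' a b := by
    simp [compressOp, ContinuousLinearMap.add_comp, ContinuousLinearMap.comp_add]
  map_smul' c a := by
    simp [compressOp, ContinuousLinearMap.smul_comp, ContinuousLinearMap.comp_smulₛₗ]

end Compress

/-!
Since `P ≥ 0`, the orthogonal complement of `K = closure (range P)` is `ker P`. If `P x = 0`, the
upper bound `S* P S ≤ β P` gives `⟪S x, P S x⟫ = ⟪x, S* P S x⟫ = 0`, hence `P S x = 0`, so `S`
preserves `ker P`. Conjugating the lower bound `α P ≤ S* P S` by `S⁻¹` gives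
`(S⁻¹)* P S⁻¹ ≤ α⁻¹ P`, so `S⁻¹` preserves `ker P` as well. An operator leaving `Kᗮ` invariant
has an adjoint leaving `K` invariant and a compression to `K` that is multiplicative against
any right factor, so the compressions of `S` and `S⁻¹` are mutually inverse.
-/

open scoped InnerProductSpace
open ContinuousLinearMap

section Positivity

variable {H : Type*} [NormedAddCommGroup H] [InnerProductSpace ℂ H]

theorem isPosOp_iff_nonneg {T : H →L[ℂ] H} : IsPosOp T ↔ 0 ≤ T := by
  rw [nonneg_iff_isPositive, isPositive_iff_complex]
  refine forall_congr' fun x ↦ ?_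
  rw [← inner_conj_symm (T x) x, Complex.nonneg_iff]
  simp only [RCLike.re_to_complex, Complex.conj_re, Complex.conj_im, Complex.ext_iff,
    Complex.ofReal_re, Complex.ofReal_im]
  grind

variable [CompleteSpace H]

theorem apply_eq_zero_of_inner_apply_self_eq_zero {P : H →L[ℂ] H} (hP : 0 ≤ P) {x : H}
    (hx : ⟪x, P x⟫_ℂ = 0) : P x = 0 := by
  obtain ⟨R, rfl⟩ := CStarAlgebra.nonneg_iff_eq_star_mul_self.mp hP
  change ⟪x, star R (R x)⟫_ℂ = 0 at hx
  rw [star_eq_adjoint, adjoint_inner_right, inner_self_eq_zero] at hx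
  change star R (R x) = 0
  rw [hx, map_zero]

theorem apply_eq_zero_of_le {A B : H →L[ℂ] H} (hA : 0 ≤ A) (hAB : A ≤ B) {x : H}
    (hx : B x = 0) : A x = 0 := by
  refine apply_eq_zero_of_inner_apply_self_eq_zero hA
    (le_antisymm ?_ (((nonneg_iff_isPositive A).mp hA).inner_nonneg_right x))
  simpa [inner_sub_right, hx] using hAB.inner_nonneg_right x

theorem apply_apply_eq_zero_of_star_mul_mul_le {P T : H →L[ℂ] H} (hP : 0 ≤ P) {c : ℂ}
    (h : star T * P * T ≤ c • P) {x : H} (hx : P x = 0) : P (T x) = 0 := by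
  have hconj : star T (P (T x)) = 0 :=
    apply_eq_zero_of_le (star_left_conjugate_nonneg hP T) h (by simp [hx])
  refine apply_eq_zero_of_inner_apply_self_eq_zero hP ?_
  rw [← adjoint_inner_right, ← star_eq_adjoint, hconj, inner_zero_right]

theorem star_inv_mul_mul_inv_le_inv_smul (u : (H →L[ℂ] H)ˣ) {P : H →L[ℂ] H} {α : ℝ}
    (hα : 0 < α) (h : (α : ℂ) • P ≤ star (u : H →L[ℂ] H) * P * u) :
    star (↑u⁻¹ : H →L[ℂ] H) * P * ↑u⁻¹ ≤ ((α⁻¹ : ℝ) : ℂ) • P := by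
  have hcancel : star (↑u⁻¹ : H →L[ℂ] H) * (star ↑u * P * ↑u) * ↑u⁻¹ = P := by
    rw [show star (↑u⁻¹ : H →L[ℂ] H) * (star ↑u * P * ↑u) * ↑u⁻¹
        = star (↑u * ↑u⁻¹ : H →L[ℂ] H) * P * (↑u * ↑u⁻¹) by simp only [star_mul, mul_assoc]]
    simp
  calc star (↑u⁻¹ : H →L[ℂ] H) * P * ↑u⁻¹
      = ((α⁻¹ : ℝ) : ℂ) • (star ↑u⁻¹ * ((α : ℂ) • P) * ↑u⁻¹) := by
        rw [mul_smul_comm, smul_mul_assoc, smul_smul]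
        norm_num [hα.ne']
    _ ≤ ((α⁻¹ : ℝ) : ℂ) • (star ↑u⁻¹ * (star ↑u * P * ↑u) * ↑u⁻¹) :=
        smul_le_smul_of_nonneg_left (star_left_conjugate_le_conjugate h _)
          (by exact_mod_cast (inv_pos.mpr hα).le)
    _ = ((α⁻¹ : ℝ) : ℂ) • P := by rw [hcancel]

theorem orthogonal_closure_range_eq_ker {P : H →L[ℂ] H} (hP : IsSelfAdjoint P) :
    (LinearMap.range (P : H →ₗ[ℂ] H)).topologicalClosureᗮ = LinearMap.ker (P : H →ₗ[ℂ] H) := by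
  have := hP.isStarNormal
  rw [Submodule.orthogonal_closure, this.orthogonal_range]

end Positivity

section Compression

variable {H : Type*} [NormedAddCommGroup H] [InnerProductSpace ℂ H]
  (K : Submodule ℂ H) [K.HasOrthogonalProjection]

theorem compressOp_one : compressOp K 1 = 1 := by
  ext x
  simp [compressOp]

theorem compressOp_mul {A : H →L[ℂ] H} (hA : ∀ x ∈ Kᗮ, A x ∈ Kᗮ) (B : H →L[ℂ] H) :
    compressOp K (A * B) = compressOp K A * compressOp K B := by
  ext x
  have hy := hA _ (K.sub_starProjection_mem_orthogonal (B x))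
  rw [map_sub, Submodule.starProjection_apply, ← Submodule.orthogonalProjectionOnto_eq_zero_iff,
    map_sub, sub_eq_zero] at hy
  simp [compressOp, hy]

theorem isUnit_compressOp (u : (H →L[ℂ] H)ˣ) (hu : ∀ x ∈ Kᗮ, (u : H →L[ℂ] H) x ∈ Kᗮ)
    (hu' : ∀ x ∈ Kᗮ, (↑u⁻¹ : H →L[ℂ] H) x ∈ Kᗮ) : IsUnit (compressOp K u) :=
  ⟨⟨compressOp K u, compressOp K ↑u⁻¹,
    by rw [← compressOp_mul K hu, u.mul_inv, compressOp_one],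
    by rw [← compressOp_mul K hu', u.inv_mul, compressOp_one]⟩, rfl⟩

variable [CompleteSpace H]

theorem star_apply_mem_of_forall_apply_mem_orthogonal {T : H →L[ℂ] H}
    (hT : ∀ x ∈ Kᗮ, T x ∈ Kᗮ) : ∀ x ∈ K, star T x ∈ K :=
  mem_invtSubmodule_adjoint_iff.mpr hT

theorem image_star_eq_of_forall_apply_mem_orthogonal (u : (H →L[ℂ] H)ˣ)
    (hu : ∀ x ∈ Kᗮ, (u : H →L[ℂ] H) x ∈ Kᗮ) (hu' : ∀ x ∈ Kᗮ, (↑u⁻¹ : H →L[ℂ] H) x ∈ Kᗮ) :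
    ⇑(star (u : H →L[ℂ] H)) '' K = K := by
  refine (Set.image_subset_iff.mpr (star_apply_mem_of_forall_apply_mem_orthogonal K hu)).antisymm
    fun y hy ↦ ⟨star (↑u⁻¹ : H →L[ℂ] H) y,
      star_apply_mem_of_forall_apply_mem_orthogonal K hu' y hy, ?_⟩
  change (star (u : H →L[ℂ] H) * star (↑u⁻¹ : H →L[ℂ] H)) y = y
  rw [← star_mul, u.inv_mul, star_one]
  rfl

end Compression

theorem stmt7_general {H : Type*} [NormedAddCommGroup H] [InnerProductSpace ℂ H] [CompleteSpace H]
    (P S : H →L[ℂ] H) (hP : IsPosOp P)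
    (hS : IsUnit S)
    (K : Submodule ℂ H) [CompleteSpace K]
    (hK : K = (LinearMap.range (P : H →ₗ[ℂ] H)).topologicalClosure)
    (α β : ℝ) (hα : 0 < α)
    (h1 : IsPosOp (star S * P * S - (α : ℂ) • P))
    (h2 : IsPosOp ((β : ℂ) • P - star S * P * S)) :
    (∀ x ∈ Kᗮ, S x ∈ Kᗮ) ∧ (⇑(star S)) '' (K : Set H) = (K : Set H) ∧
    IsUnit (compressOp K S) := by
  obtain ⟨u, rfl⟩ := hS
  have hP₀ : 0 ≤ P := isPosOp_iff_nonneg.mp hP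
  have hKperp : Kᗮ = LinearMap.ker (P : H →ₗ[ℂ] H) :=
    hK ▸ orthogonal_closure_range_eq_ker hP₀.isSelfAdjoint
  have hu : ∀ x ∈ Kᗮ, (u : H →L[ℂ] H) x ∈ Kᗮ := by
    rw [hKperp]
    exact fun x ↦
      apply_apply_eq_zero_of_star_mul_mul_le hP₀ (sub_nonneg.mp (isPosOp_iff_nonneg.mp h2))
  have hu' : ∀ x ∈ Kᗮ, (↑u⁻¹ : H →L[ℂ] H) x ∈ Kᗮ := by
    rw [hKperp]
    exact fun x ↦ apply_apply_eq_zero_of_star_mul_mul_le hP₀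
      (star_inv_mul_mul_inv_le_inv_smul u hα (sub_nonneg.mp (isPosOp_iff_nonneg.mp h1)))
  exact ⟨hu, image_star_eq_of_forall_apply_mem_orthogonal K u hu hu', isUnit_compressOp K u hu hu'⟩

/-- Lemma `lem-P-S-decomp`. If `S` is invertible with
`α P ≤ S* P S ≤ β P` for some `α, β > 0`, where `P ≥ 0`, `P ≠ 0`, `ker P ≠ 0`, and `K` is the
closure of the range of `P`, then `S` maps `Kᗮ` into `Kᗮ` (equivalently `S*` maps `K` onto
`K`), and the compression of `S` to `K` is invertible in `B(K)`. -/
theorem stmt7 {H : Type*} [NormedAddCommGroup H] [InnerProductSpace ℂ H] [CompleteSpace H]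
    (P S : H →L[ℂ] H) (hP : IsPosOp P) (hP0 : P ≠ 0) (hker : LinearMap.ker (P : H →ₗ[ℂ] H) ≠ ⊥)
    (hS : IsUnit S)
    (K : Submodule ℂ H) [CompleteSpace K]
    (hK : K = (LinearMap.range (P : H →ₗ[ℂ] H)).topologicalClosure)
    (α β : ℝ) (hα : 0 < α) (hβ : 0 < β)
    (h1 : IsPosOp (star S * P * S - (α : ℂ) • P))
    (h2 : IsPosOp ((β : ℂ) • P - star S * P * S)) :
    (∀ x ∈ Kᗮ, S x ∈ Kᗮ) ∧ (⇑(star S)) '' (K : Set H) = (K : Set H) ∧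
    IsUnit (compressOp K S) :=
  stmt7_general P S hP hS K hK α β hα h1 h2

end
end
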